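/- arXiv:2403.13027 — 8 statements merged into one kernel-verified Lean document; each statement's English description precedes it below -/
import Mathlib

section
/- For any two probability distributions Q and P on a finite set, the total variation distance satisfies TV(Q,P) ≤ sqrt(1 − exp(−D_kl(Q‖P))) (Bretagnolle–Huber inequality). -/
/-! With `m = ∑ x, min (Q x) (P x)` one has `|Q(A) - P(A)| ≤ 1 - m`, while Jensen's inequality
for `exp` and Cauchy–Schwarz give `exp (-KL / 2) ≤ ∑ x, √(Q x P x) ≤ √(m (2 - m))`.
Squaring, `exp (-KL) ≤ m (2 - m) = 1 - (1 - m) ^ 2`. -/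

open Finset Real

/-- KL divergence of finite probability mass functions. -/
noncomputable def KLfin {Ω : Type*} [Fintype Ω] (Q P : Ω → ℝ) : ℝ :=
  ∑ x, Q x * Real.log (Q x / P x)

noncomputable def bhattacharyya {Ω : Type*} [Fintype Ω] (Q P : Ω → ℝ) : ℝ :=
  ∑ x, √(Q x) * √(P x)

section

variable {Ω : Type*} [Fintype Ω] {Q P : Ω → ℝ}

theorem sum_sub_sum_le_sum_sub_sum_min (A : Finset Ω) :
    ∑ x ∈ A, Q x - ∑ x ∈ A, P x ≤ ∑ x, Q x - ∑ x, min (Q x) (P x) := by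
  rw [← sum_sub_distrib, ← sum_sub_distrib]
  calc ∑ x ∈ A, (Q x - P x) ≤ ∑ x ∈ A, (Q x - min (Q x) (P x)) :=
        sum_le_sum fun x _ => sub_le_sub_left (min_le_right _ _) _
    _ ≤ ∑ x, (Q x - min (Q x) (P x)) :=
        sum_le_univ_sum_of_nonneg fun x => sub_nonneg.mpr (min_le_left _ _)

theorem abs_sum_sub_sum_le_one_sub_sum_min (hQ1 : ∑ x, Q x = 1) (hP1 : ∑ x, P x = 1)
    (A : Finset Ω) : |∑ x ∈ A, Q x - ∑ x ∈ A, P x| ≤ 1 - ∑ x, min (Q x) (P x) := by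
  rw [abs_sub_le_iff]
  constructor
  · simpa [hQ1] using sum_sub_sum_le_sum_sub_sum_min (Q := Q) (P := P) A
  · simpa [hP1, min_comm] using sum_sub_sum_le_sum_sub_sum_min (Q := P) (P := Q) A

/-- Cauchy–Schwarz after writing `Q x * P x = min (Q x) (P x) * max (Q x) (P x)`. -/
theorem bhattacharyya_le_sqrt_sum_min_mul_sqrt_sum_max (hQ0 : ∀ x, 0 ≤ Q x) (hP0 : ∀ x, 0 ≤ P x) :
    bhattacharyya Q P ≤ √(∑ x, min (Q x) (P x)) * √(∑ x, max (Q x) (P x)) := by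
  have hmin : ∀ x, 0 ≤ min (Q x) (P x) := fun x => le_min (hQ0 x) (hP0 x)
  have hmax : ∀ x, 0 ≤ max (Q x) (P x) := fun x => (hQ0 x).trans (le_max_left _ _)
  calc bhattacharyya Q P = ∑ x, √(min (Q x) (P x)) * √(max (Q x) (P x)) := by
        refine sum_congr rfl fun x _ => ?_
        rw [← sqrt_mul (hQ0 x), ← sqrt_mul (hmin x), min_mul_max]
    _ ≤ _ := sum_sqrt_mul_sqrt_le univ hmin hmax

/-- Jensen's inequality for `exp` with weights `Q` at the points `log √(P x / Q x)`. -/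
theorem exp_neg_half_KLfin_le_bhattacharyya (hQ0 : ∀ x, 0 ≤ Q x) (hQ1 : ∑ x, Q x = 1)
    (hP0 : ∀ x, 0 ≤ P x) (hac : ∀ x, P x = 0 → Q x = 0) :
    exp (-KLfin Q P / 2) ≤ bhattacharyya Q P := by
  have hexp : ∀ x, Q x * exp (log √(P x / Q x)) = √(Q x) * √(P x) := by
    intro x
    rcases (hQ0 x).eq_or_lt with hQ | hQ
    · simp [← hQ]
    have hP : 0 < P x := (hP0 x).lt_of_ne fun h => hQ.ne' (hac x h.symm)
    rw [exp_log (sqrt_pos.mpr (div_pos hP hQ)), sqrt_div' _ (hQ0 x)]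
    field_simp
    rw [sq_sqrt (hQ0 x)]
  have hlog : ∀ x, Q x * log √(P x / Q x) = -(Q x * log (Q x / P x)) / 2 := by
    intro x
    rw [log_sqrt (div_nonneg (hP0 x) (hQ0 x)), ← inv_div (P x), log_inv]
    ring
  have jensen := convexOn_exp.map_sum_le (t := univ) (w := Q)
    (p := fun x => log √(P x / Q x)) (fun x _ => hQ0 x) hQ1 (fun x _ => Set.mem_univ _)
  simp only [smul_eq_mul, hexp, hlog, ← sum_div, sum_neg_distrib] at jensen
  exact jensen

end

/-- Bretagnolle–Huber inequality: for probability mass functions `Q ≪ P` on a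
finite set, `TV(Q,P) = sup_A |Q(A) − P(A)| ≤ sqrt (1 − exp (−D_kl(Q‖P)))`. -/
theorem bretagnolle_huber {Ω : Type*} [Fintype Ω]
    (Q P : Ω → ℝ)
    (hQ0 : ∀ x, 0 ≤ Q x) (hQ1 : ∑ x, Q x = 1)
    (hP0 : ∀ x, 0 ≤ P x) (hP1 : ∑ x, P x = 1)
    (hac : ∀ x, P x = 0 → Q x = 0) :
    ∀ A : Finset Ω, |∑ x ∈ A, Q x - ∑ x ∈ A, P x| ≤
      Real.sqrt (1 - Real.exp (-(KLfin Q P))) := by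
  intro A
  set m := ∑ x, min (Q x) (P x)
  have hmax : ∑ x, max (Q x) (P x) = 2 - m := by
    rw [eq_sub_iff_add_eq, ← sum_add_distrib]
    simp only [max_add_min, sum_add_distrib, hQ1, hP1]
    norm_num
  have hm0 : 0 ≤ m := sum_nonneg fun x _ => le_min (hQ0 x) (hP0 x)
  have hM0 : 0 ≤ 2 - m := hmax ▸ sum_nonneg fun x _ => (hQ0 x).trans (le_max_left _ _)
  have hexp : √(exp (-KLfin Q P)) ≤ √(m * (2 - m)) := by
    rw [← exp_half, sqrt_mul hm0, ← hmax]
    exact (exp_neg_half_KLfin_le_bhattacharyya hQ0 hQ1 hP0 hac).trans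
      (bhattacharyya_le_sqrt_sum_min_mul_sqrt_sum_max hQ0 hP0)
  rw [sqrt_le_sqrt_iff (mul_nonneg hm0 hM0)] at hexp
  calc |∑ x ∈ A, Q x - ∑ x ∈ A, P x| ≤ |1 - m| :=
        (abs_sum_sub_sum_le_one_sub_sum_min hQ1 hP1 A).trans (le_abs_self _)
    _ ≤ √(1 - exp (-KLfin Q P)) := abs_le_sqrt (by nlinarith)
end

section
/- For any two distributions P and Q on a finite set, the sum of the type I and type II errors of any test distinguishing Q from P is at least 1 − sqrt(1 − exp(−D_kl(Q‖P))). In particular, as D_kl(Q‖P) → 0 this lower bound tends to 1. -/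
open Finset Real Filter

/-!
Every test errs on at least the overlap `m = ∑ min (P x) (Q x)`. By Cauchy–Schwarz the
Bhattacharyya coefficient `B = ∑ √(P x Q x)` satisfies `B² ≤ (∑ min)(∑ max) = m (2 - m)`,
and by the weighted AM–GM inequality (Jensen for `log`) with weights `Q` and values `√(P/Q)`,
`exp (-D_kl(Q‖P) / 2) ≤ B`. Hence `(1 - m)² = 1 - m (2 - m) ≤ 1 - exp (-D_kl(Q‖P))`.
-/

noncomputable def bhattacharyyaCoeff {Ω : Type*} [Fintype Ω] (P Q : Ω → ℝ) : ℝ :=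
  ∑ x, √(P x * Q x)

section Pointwise

variable {p q : ℝ}

theorem mul_sqrt_div_eq_sqrt_mul (hq : 0 ≤ q) : q * √(p / q) = √(p * q) := by
  rcases hq.eq_or_lt with rfl | hq
  · simp
  · rw [show p * q = p / q * q ^ 2 by field_simp, sqrt_mul' _ (sq_nonneg q), sqrt_sq hq.le,
      mul_comm]

theorem mul_log_sqrt_div (hpq : 0 ≤ p / q) : q * log √(p / q) = -(q * log (q / p)) / 2 := by
  rw [log_sqrt hpq, ← inv_div q p, log_inv]
  ring

theorem sqrt_div_rpow_eq_exp (hp : 0 ≤ p) (hq : 0 ≤ q) (hpq : p = 0 → q = 0) :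
    √(p / q) ^ q = exp (q * log √(p / q)) := by
  rcases hq.eq_or_lt with rfl | hq
  · simp
  · have hp : 0 < p := hp.lt_of_ne fun h => hq.ne' (hpq h.symm)
    rw [rpow_def_of_pos (sqrt_pos.mpr (div_pos hp hq)), mul_comm]

end Pointwise

section Finite

variable {Ω : Type*} [Fintype Ω] {P Q : Ω → ℝ}

theorem sum_min_le_sum_ite (ψ : Ω → Bool) :
    ∑ x, min (P x) (Q x) ≤ ∑ x, (if ψ x then P x else Q x) :=
  sum_le_sum fun x _ => by cases ψ x <;> simp

theorem sum_max_eq_two_sub_sum_min (hP1 : ∑ x, P x = 1) (hQ1 : ∑ x, Q x = 1) :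
    ∑ x, max (P x) (Q x) = 2 - ∑ x, min (P x) (Q x) := by
  have h : ∑ x, (min (P x) (Q x) + max (P x) (Q x)) = 2 := by
    simp only [min_add_max, sum_add_distrib, hP1, hQ1]
    norm_num
  rw [sum_add_distrib] at h
  linarith

theorem bhattacharyyaCoeff_sq_le (hP0 : ∀ x, 0 ≤ P x) (hQ0 : ∀ x, 0 ≤ Q x) :
    bhattacharyyaCoeff P Q ^ 2 ≤ (∑ x, min (P x) (Q x)) * ∑ x, max (P x) (Q x) :=
  sum_sq_le_sum_mul_sum_of_sq_le_mul _ (fun x _ => le_min (hP0 x) (hQ0 x))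
    (fun x _ => le_max_of_le_left (hP0 x))
    fun x _ => (sq_sqrt (mul_nonneg (hP0 x) (hQ0 x))).trans (min_mul_max _ _).symm |>.le

theorem exp_neg_KLfin_div_two_le_bhattacharyyaCoeff (hQ0 : ∀ x, 0 ≤ Q x)
    (hQ1 : ∑ x, Q x = 1) (hP0 : ∀ x, 0 ≤ P x) (hac : ∀ x, P x = 0 → Q x = 0) :
    exp (-KLfin Q P / 2) ≤ bhattacharyyaCoeff P Q :=
  calc exp (-KLfin Q P / 2) = ∏ x, √(P x / Q x) ^ Q x := by
        rw [KLfin, ← sum_neg_distrib, sum_div, exp_sum]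
        refine prod_congr rfl fun x _ => ?_
        rw [sqrt_div_rpow_eq_exp (hP0 x) (hQ0 x) (hac x),
          mul_log_sqrt_div (div_nonneg (hP0 x) (hQ0 x))]
    _ ≤ ∑ x, Q x * √(P x / Q x) :=
        geom_mean_le_arith_mean_weighted _ _ _ (fun x _ => hQ0 x) hQ1
          fun x _ => sqrt_nonneg _
    _ = bhattacharyyaCoeff P Q := sum_congr rfl fun x _ => mul_sqrt_div_eq_sqrt_mul (hQ0 x)

end Finite

theorem one_sub_sqrt_one_sub_le {c m : ℝ} (h : c ≤ m * (2 - m)) : 1 - √(1 - c) ≤ m := by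
  have : |1 - m| ≤ √(1 - c) := abs_le_sqrt (by nlinarith)
  linarith [le_abs_self (1 - m)]

/-- For any test `ψ : Ω → {0,1}` distinguishing `Q` from `P`, the sum of the
type I error `P(ψ = 1)` and the type II error `Q(ψ = 0)` is at least
`1 − sqrt (1 − exp (−D_kl(Q‖P)))`; moreover this lower bound tends to `1` as
the KL divergence tends to `0`. -/
theorem error_sum_lower_bound {Ω : Type*} [Fintype Ω]
    (Q P : Ω → ℝ)
    (hQ0 : ∀ x, 0 ≤ Q x) (hQ1 : ∑ x, Q x = 1)
    (hP0 : ∀ x, 0 ≤ P x) (hP1 : ∑ x, P x = 1)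
    (hac : ∀ x, P x = 0 → Q x = 0) :
    (∀ ψ : Ω → Bool,
      1 - Real.sqrt (1 - Real.exp (-(KLfin Q P))) ≤
        ∑ x, (if ψ x then P x else Q x)) ∧
    Tendsto (fun d : ℝ => 1 - Real.sqrt (1 - Real.exp (-d)))
      (nhds 0) (nhds 1) := by
  refine ⟨fun ψ => ?_, ?_⟩
  · have hexp : exp (-KLfin Q P) ≤ bhattacharyyaCoeff P Q ^ 2 := by
      rw [show exp (-KLfin Q P) = exp (-KLfin Q P / 2) ^ 2 by rw [sq, ← exp_add]; ring_nf]
      exact pow_le_pow_left₀ (exp_pos _).le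
        (exp_neg_KLfin_div_two_le_bhattacharyyaCoeff hQ0 hQ1 hP0 hac) 2
    have hCS := bhattacharyyaCoeff_sq_le hP0 hQ0
    rw [sum_max_eq_two_sub_sum_min hP1 hQ1] at hCS
    exact (one_sub_sqrt_one_sub_le (hexp.trans hCS)).trans (sum_min_le_sum_ite ψ)
  · simpa using ((by fun_prop : Continuous fun d : ℝ => 1 - √(1 - exp (-d))).tendsto 0)
end

section
/- Consider a probability vector p on a finite vocabulary V partitioned into a green set and a red set with G = Σ_{k green} p_k and R = 1 − G, both in (0,1). Among all probability vectors q = (r_k p_k)_k with Σ_k r_k p_k = 1 and Σ_{k green} (r_k − 1) p_k ≥ Δ for some 0 < Δ < R, the minimizer of Σ_k r_k p_k log(r_k) has all r_k over green indices equal and all r_k over red indices equal, and the minimum value equals (R−Δ)log((R−Δ)/R) + (G+Δ)log((G+Δ)/G). -/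
/-!
Let `r₀` be the reweighting equal to `(G + Δ) / G` on `S` and `(R - Δ) / R` off `S`; it is
feasible and attains the claimed value. For any feasible `r`,
`KL(r p ‖ p) = KL(r p ‖ r₀ p) + ∑ r p log r₀`. The first term is nonnegative and vanishes only
at `r = r₀` (Gibbs). The second depends on `r` only through its green mass `A ≥ G + Δ` and,
since `r₀` is larger on `S` than off it, is increasing in `A`; at `A = G + Δ` it equals
`KL(r₀ p ‖ p)`.
-/

open Finset Real InformationTheory

lemma mul_log_eq_mul_klFun_div_add (x : ℝ) {y : ℝ} (hy : y ≠ 0) :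
    x * log x = y * klFun (x / y) + x * log y + x - y := by
  rcases eq_or_ne x 0 with rfl | hx
  · simp [klFun_zero]
  · rw [klFun_apply, log_div hx hy]
    field_simp
    ring

section Reweighting

variable {ι : Type*} (s : Finset ι) (p r r₀ : ι → ℝ)

/-- The first sum on the right is the relative entropy of `r p` against `r₀ p`, so this is the
chain rule `KL(r p ‖ p) = KL(r p ‖ r₀ p) + ∑ r p log r₀`. -/
theorem sum_mul_log_eq_sum_klFun_add (hr₀ : ∀ k ∈ s, r₀ k ≠ 0)
    (hmass : ∑ k ∈ s, r k * p k = ∑ k ∈ s, r₀ k * p k) :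
    ∑ k ∈ s, r k * p k * log (r k) =
      ∑ k ∈ s, r₀ k * p k * klFun (r k / r₀ k) + ∑ k ∈ s, r k * p k * log (r₀ k) := by
  have hpoint : ∀ k ∈ s, r k * p k * log (r k) =
      r₀ k * p k * klFun (r k / r₀ k) + r k * p k * log (r₀ k) + (r k * p k - r₀ k * p k) := by
    intro k hk
    rw [mul_right_comm, mul_log_eq_mul_klFun_div_add (r k) (hr₀ k hk)]
    ring
  rw [sum_congr rfl hpoint, sum_add_distrib, sum_add_distrib, sum_sub_distrib, hmass, sub_self,
    add_zero]

variable {s p r r₀}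

theorem sum_mul_klFun_div_nonneg (hp : ∀ k ∈ s, 0 ≤ p k) (hr : ∀ k ∈ s, 0 ≤ r k)
    (hr₀ : ∀ k ∈ s, 0 < r₀ k) : 0 ≤ ∑ k ∈ s, r₀ k * p k * klFun (r k / r₀ k) :=
  sum_nonneg fun k hk => mul_nonneg (mul_nonneg (hr₀ k hk).le (hp k hk))
    (klFun_nonneg (div_nonneg (hr k hk) (hr₀ k hk).le))

theorem sum_mul_klFun_div_eq_zero_iff (hp : ∀ k ∈ s, 0 < p k) (hr : ∀ k ∈ s, 0 ≤ r k)
    (hr₀ : ∀ k ∈ s, 0 < r₀ k) :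
    ∑ k ∈ s, r₀ k * p k * klFun (r k / r₀ k) = 0 ↔ ∀ k ∈ s, r k = r₀ k := by
  rw [sum_eq_zero_iff_of_nonneg fun k hk => mul_nonneg (mul_nonneg (hr₀ k hk).le (hp k hk).le)
    (klFun_nonneg (div_nonneg (hr k hk) (hr₀ k hk).le))]
  refine forall₂_congr fun k hk => ?_
  rw [mul_eq_zero_iff_left (mul_pos (hr₀ k hk) (hp k hk)).ne',
    klFun_eq_zero_iff (div_nonneg (hr k hk) (hr₀ k hk).le), div_eq_one_iff_eq (hr₀ k hk).ne']


theorem sum_mul_log_le_of_cross_le (hp : ∀ k ∈ s, 0 ≤ p k) (hr : ∀ k ∈ s, 0 ≤ r k)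
    (hr₀ : ∀ k ∈ s, 0 < r₀ k) (hmass : ∑ k ∈ s, r k * p k = ∑ k ∈ s, r₀ k * p k)
    (hcross : ∑ k ∈ s, r₀ k * p k * log (r₀ k) ≤ ∑ k ∈ s, r k * p k * log (r₀ k)) :
    ∑ k ∈ s, r₀ k * p k * log (r₀ k) ≤ ∑ k ∈ s, r k * p k * log (r k) := by
  rw [sum_mul_log_eq_sum_klFun_add s p r r₀ (fun k hk => (hr₀ k hk).ne') hmass]
  linarith [sum_mul_klFun_div_nonneg hp hr hr₀]

theorem eq_of_sum_mul_log_le_of_cross_le (hp : ∀ k ∈ s, 0 < p k) (hr : ∀ k ∈ s, 0 ≤ r k)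
    (hr₀ : ∀ k ∈ s, 0 < r₀ k) (hmass : ∑ k ∈ s, r k * p k = ∑ k ∈ s, r₀ k * p k)
    (hcross : ∑ k ∈ s, r₀ k * p k * log (r₀ k) ≤ ∑ k ∈ s, r k * p k * log (r₀ k))
    (hle : ∑ k ∈ s, r k * p k * log (r k) ≤ ∑ k ∈ s, r₀ k * p k * log (r₀ k)) :
    ∀ k ∈ s, r k = r₀ k := by
  rw [sum_mul_log_eq_sum_klFun_add s p r r₀ (fun k hk => (hr₀ k hk).ne') hmass] at hle
  refine (sum_mul_klFun_div_eq_zero_iff hp hr hr₀).1 (le_antisymm ?_ ?_)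
  · linarith
  · exact sum_mul_klFun_div_nonneg (fun k hk => (hp k hk).le) hr hr₀

end Reweighting

section TwoLevel

variable {ι : Type*} [DecidableEq ι] (S : Finset ι) (a b : ℝ)

def twoLevel (k : ι) : ℝ := if k ∈ S then a else b

theorem twoLevel_pos (ha : 0 < a) (hb : 0 < b) (k : ι) : 0 < twoLevel S a b k := by
  unfold twoLevel
  split_ifs <;> assumption

theorem sum_mem_twoLevel_mul (f : ι → ℝ) :
    ∑ k ∈ S, twoLevel S a b k * f k = a * ∑ k ∈ S, f k := by
  rw [mul_sum]
  exact sum_congr rfl fun k hk => by rw [twoLevel, if_pos hk]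

variable [Fintype ι]

theorem sum_twoLevel_mul (f : ι → ℝ) :
    ∑ k, twoLevel S a b k * f k = a * ∑ k ∈ S, f k + b * ∑ k ∈ Sᶜ, f k := by
  rw [← sum_add_sum_compl S, sum_mem_twoLevel_mul, mul_sum Sᶜ f b]
  exact congrArg _ (sum_congr rfl fun k hk => by rw [twoLevel, if_neg (mem_compl.1 hk)])

theorem sum_mul_log_twoLevel (w : ι → ℝ) :
    ∑ k, w k * log (twoLevel S a b k) =
      (∑ k, w k) * log b + (∑ k ∈ S, w k) * (log a - log b) := by
  have hlog : ∀ k, log (twoLevel S a b k) = twoLevel S (log a) (log b) k :=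
    fun k => apply_ite log _ _ _
  simp only [hlog, mul_comm (w _), sum_twoLevel_mul, ← sum_add_sum_compl S w]
  ring

theorem sum_mul_log_twoLevel_le {w w' : ι → ℝ} (hab : b ≤ a) (hb : 0 < b)
    (hmass : ∑ k, w k = ∑ k, w' k) (hS : ∑ k ∈ S, w k ≤ ∑ k ∈ S, w' k) :
    ∑ k, w k * log (twoLevel S a b k) ≤ ∑ k, w' k * log (twoLevel S a b k) := by
  rw [sum_mul_log_twoLevel, sum_mul_log_twoLevel, hmass]
  gcongr
  exact sub_nonneg.2 (log_le_log hb hab)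

end TwoLevel

theorem green_list_optimal_reweighting_general {V : Type*} [Fintype V]
    (p : V → ℝ) (hp0 : ∀ k, 0 < p k) (hp1 : ∑ k, p k = 1)
    (S : Finset V) (G R Δ : ℝ)
    (hG : G = ∑ k ∈ S, p k) (hR : R = 1 - G)
    (hG0 : 0 < G) (hΔ0 : 0 < Δ) (hΔR : Δ < R) :
    IsLeast
      {val : ℝ | ∃ r : V → ℝ, (∀ k, 0 ≤ r k) ∧
        (∑ k, r k * p k = 1) ∧
        (Δ ≤ ∑ k ∈ S, (r k - 1) * p k) ∧
        val = ∑ k, r k * p k * Real.log (r k)}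
      ((R - Δ) * Real.log ((R - Δ) / R) + (G + Δ) * Real.log ((G + Δ) / G)) ∧
    (∀ r : V → ℝ, (∀ k, 0 ≤ r k) →
      (∑ k, r k * p k = 1) →
      (Δ ≤ ∑ k ∈ S, (r k - 1) * p k) →
      (∑ k, r k * p k * Real.log (r k) =
        (R - Δ) * Real.log ((R - Δ) / R) + (G + Δ) * Real.log ((G + Δ) / G)) →
      (∀ k ∈ S, r k = (G + Δ) / G) ∧ (∀ k ∉ S, r k = (R - Δ) / R)) := by
  classical
  have hR0 : 0 < R := hΔ0.trans hΔR
  have hGS : ∑ k ∈ S, p k = G := hG.symm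
  have hRS : ∑ k ∈ Sᶜ, p k = R := by linarith [sum_add_sum_compl S p]
  have hexcess : ∀ r : V → ℝ, ∑ k ∈ S, (r k - 1) * p k = ∑ k ∈ S, r k * p k - G := fun r => by
    simp only [sub_mul, one_mul, sum_sub_distrib, hGS]
  have hba : (R - Δ) / R ≤ (G + Δ) / G :=
    ((div_le_one hR0).2 (by linarith)).trans ((one_le_div hG0).2 (by linarith))
  set r₀ := twoLevel S ((G + Δ) / G) ((R - Δ) / R)
  have hr₀ : ∀ k, 0 < r₀ k := twoLevel_pos S _ _ (by positivity) (div_pos (by linarith) hR0)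
  have hr₀S : ∑ k ∈ S, r₀ k * p k = G + Δ := by
    rw [sum_mem_twoLevel_mul, hGS, div_mul_cancel₀ _ hG0.ne']
  have hr₀_mass : ∑ k, r₀ k * p k = 1 := by
    rw [sum_twoLevel_mul, hGS, hRS, div_mul_cancel₀ _ hG0.ne', div_mul_cancel₀ _ hR0.ne']
    linarith
  have hcross : ∀ r : V → ℝ, ∑ k, r k * p k = 1 → Δ ≤ ∑ k ∈ S, (r k - 1) * p k →
      ∑ k, r₀ k * p k * log (r₀ k) ≤ ∑ k, r k * p k * log (r₀ k) := fun r hmass hΔ =>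
    sum_mul_log_twoLevel_le S _ _ hba (div_pos (by linarith) hR0) (hr₀_mass.trans hmass.symm)
      (by linarith [hexcess r])
  have hval : ∑ k, r₀ k * p k * log (r₀ k) =
      (R - Δ) * log ((R - Δ) / R) + (G + Δ) * log ((G + Δ) / G) := by
    rw [sum_mul_log_twoLevel S _ _ fun k => r₀ k * p k, hr₀_mass, hr₀S,
      show R - Δ = 1 - (G + Δ) by linarith]
    ring
  refine ⟨⟨⟨r₀, fun k => (hr₀ k).le, hr₀_mass, by linarith [hexcess r₀], hval.symm⟩, ?_⟩, ?_⟩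
  · rintro _ ⟨r, hr, hmass, hΔ, rfl⟩
    exact hval ▸ sum_mul_log_le_of_cross_le (fun k _ => (hp0 k).le) (fun k _ => hr k)
      (fun k _ => hr₀ k)
      (hmass.trans hr₀_mass.symm) (hcross r hmass hΔ)
  · intro r hr hmass hΔ hopt
    have hr_eq := eq_of_sum_mul_log_le_of_cross_le (fun k _ => hp0 k) (fun k _ => hr k)
      (fun k _ => hr₀ k) (hmass.trans hr₀_mass.symm) (hcross r hmass hΔ) (hopt.trans hval.symm).le
    exact ⟨fun k hk => (hr_eq k (mem_univ k)).trans (if_pos hk),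
      fun k hk => (hr_eq k (mem_univ k)).trans (if_neg hk)⟩

/-- Optimal reweighting for the green-list watermarking problem: subject to
preserving total probability and increasing the green mass by at least `Δ`,
the KL-minimal reweighting `r` is constant on the green list and constant on
the red list, and the minimal value is
`(R−Δ)log((R−Δ)/R) + (G+Δ)log((G+Δ)/G)`. -/
theorem green_list_optimal_reweighting {V : Type*} [Fintype V]
    (p : V → ℝ) (hp0 : ∀ k, 0 < p k) (hp1 : ∑ k, p k = 1)
    (S : Finset V) (G R Δ : ℝ)
    (hG : G = ∑ k ∈ S, p k) (hR : R = 1 - G)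
    (hG0 : 0 < G) (hG1 : G < 1) (hΔ0 : 0 < Δ) (hΔR : Δ < R) :
    IsLeast
      {val : ℝ | ∃ r : V → ℝ, (∀ k, 0 ≤ r k) ∧
        (∑ k, r k * p k = 1) ∧
        (Δ ≤ ∑ k ∈ S, (r k - 1) * p k) ∧
        val = ∑ k, r k * p k * Real.log (r k)}
      ((R - Δ) * Real.log ((R - Δ) / R) + (G + Δ) * Real.log ((G + Δ) / G)) ∧
    (∀ r : V → ℝ, (∀ k, 0 ≤ r k) →
      (∑ k, r k * p k = 1) →
      (Δ ≤ ∑ k ∈ S, (r k - 1) * p k) →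
      (∑ k, r k * p k * Real.log (r k) =
        (R - Δ) * Real.log ((R - Δ) / R) + (G + Δ) * Real.log ((G + Δ) / G)) →
      (∀ k ∈ S, r k = (G + Δ) / G) ∧ (∀ k ∉ S, r k = (R - Δ) / R)) :=
  green_list_optimal_reweighting_general p hp0 hp1 S G R Δ hG hR hG0 hΔ0 hΔR
end

section
/- With green list probability G ∈ (0,1) under the original distribution, and the watermarked distribution obtained by adding δ to the logits of green tokens, the difference of green word probability equals DG(δ) = G(1−G)(e^δ − 1)/(G e^δ − G + 1), and the KL divergence of the watermarked distribution from the original equals D_kl(δ) = G δ e^δ/(G e^δ − G + 1) − log(G e^δ − G + 1). -/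
open Finset Real

/-!
Adding the bias `δ·1_S` to the logits tilts the softmax distribution: `q_k = p_k e^{δ 1_S(k)} / N`
with normaliser `N = Σ_k p_k e^{δ 1_S(k)} = G e^δ - G + 1`. Hence `Σ_{k ∈ S} q_k = G e^δ / N`, and
`log (q_k / p_k) = δ 1_S(k) - log N`, so the KL divergence is `δ Σ_{k ∈ S} q_k - log N`.
-/

noncomputable def softmax {V : Type*} [Fintype V] (l : V → ℝ) (k : V) : ℝ :=
  exp (l k) / ∑ j, exp (l j)

noncomputable def expTilt {V : Type*} [Fintype V] (p b : V → ℝ) (k : V) : ℝ :=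
  p k * exp (b k) / ∑ j, p j * exp (b j)

section Softmax

variable {V : Type*} [Fintype V] [Nonempty V]

lemma sum_exp_pos (l : V → ℝ) : 0 < ∑ j, exp (l j) :=
  sum_pos (fun j _ => exp_pos (l j)) univ_nonempty

lemma softmax_pos (l : V → ℝ) (k : V) : 0 < softmax l k :=
  div_pos (exp_pos _) (sum_exp_pos l)

lemma sum_softmax (l : V → ℝ) : ∑ k, softmax l k = 1 := by
  simp only [softmax, ← sum_div, div_self (sum_exp_pos l).ne']

lemma softmax_add (l b : V → ℝ) : softmax (fun k => l k + b k) = expTilt (softmax l) b := by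
  have hZ := (sum_exp_pos l).ne'
  have hnorm : ∑ j, softmax l j * exp (b j) = (∑ j, exp (l j + b j)) / ∑ j, exp (l j) := by
    simp only [softmax, div_mul_eq_mul_div, exp_add, sum_div]
  funext k
  rw [expTilt, hnorm, softmax, softmax, exp_add]
  field_simp

end Softmax

section ExpTilt

variable {V : Type*} [Fintype V] (p b : V → ℝ)

lemma sum_expTilt (hN : ∑ j, p j * exp (b j) ≠ 0) : ∑ k, expTilt p b k = 1 := by
  simp only [expTilt, ← sum_div, div_self hN]

lemma sum_expTilt_mul_log_div [Nonempty V] (hp : ∀ k, 0 < p k) :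
    ∑ k, expTilt p b k * log (expTilt p b k / p k) =
      ∑ k, expTilt p b k * b k - log (∑ j, p j * exp (b j)) := by
  have hN : 0 < ∑ j, p j * exp (b j) :=
    sum_pos (fun j _ => mul_pos (hp j) (exp_pos _)) univ_nonempty
  have hlog : ∀ k, log (expTilt p b k / p k) = b k - log (∑ j, p j * exp (b j)) := by
    intro k
    have hratio : expTilt p b k / p k = exp (b k) / ∑ j, p j * exp (b j) := by
      rw [expTilt]
      field_simp [(hp k).ne']
    rw [hratio, log_div (exp_pos _).ne' hN.ne', log_exp]
  simp only [hlog, mul_sub, sum_sub_distrib, ← sum_mul, sum_expTilt p b hN.ne', one_mul]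

end ExpTilt

section GreenList

variable {V : Type*} [Fintype V] [DecidableEq V] (p : V → ℝ) (S : Finset V) (δ : ℝ)

lemma sum_mul_exp_green :
    ∑ k, p k * exp (δ * if k ∈ S then 1 else 0) = ∑ k, p k + (exp δ - 1) * ∑ k ∈ S, p k := by
  have hterm : ∀ k, p k * exp (δ * if k ∈ S then 1 else 0) =
      p k + if k ∈ S then (exp δ - 1) * p k else 0 := by
    intro k
    split_ifs
    · rw [mul_one]; ring
    · rw [mul_zero, exp_zero, mul_one, add_zero]
  rw [sum_congr rfl fun k _ => hterm k, sum_add_distrib, sum_ite_mem, univ_inter, mul_sum]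

lemma sum_expTilt_green_mem :
    ∑ k ∈ S, expTilt p (fun k => δ * if k ∈ S then 1 else 0) k =
      exp δ * (∑ k ∈ S, p k) / ∑ k, p k * exp (δ * if k ∈ S then 1 else 0) := by
  rw [mul_sum, sum_div]
  refine sum_congr rfl fun k hk => ?_
  simp only [expTilt, hk, if_true, mul_one, mul_comm]

lemma sum_mul_green_bias (q : V → ℝ) :
    ∑ k, q k * (δ * if k ∈ S then 1 else 0) = δ * ∑ k ∈ S, q k := by
  simp only [mul_ite, mul_one, mul_zero, sum_ite_mem, univ_inter, mul_sum, mul_comm]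

end GreenList

/-- Closed-form expressions for the soft (green-list logit shift) watermarking:
the difference of green probability is `G(1−G)(e^δ−1)/(G e^δ − G + 1)` and the
KL divergence from the original distribution is
`G δ e^δ/(G e^δ − G + 1) − log(G e^δ − G + 1)`. -/
theorem soft_watermark_DG_KL_formulas {V : Type*} [Fintype V] [Nonempty V] [DecidableEq V]
    (l : V → ℝ) (S : Finset V) (δ : ℝ)
    (p q : V → ℝ) (G : ℝ)
    (hp : ∀ k, p k = Real.exp (l k) / ∑ k', Real.exp (l k'))
    (hq : ∀ k, q k = Real.exp (l k + δ * (if k ∈ S then 1 else 0)) /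
        ∑ k', Real.exp (l k' + δ * (if k' ∈ S then 1 else 0)))
    (hG : G = ∑ k ∈ S, p k) :
    (∑ k ∈ S, q k) - G =
        G * (1 - G) * (Real.exp δ - 1) / (G * Real.exp δ - G + 1) ∧
    (∑ k, q k * Real.log (q k / p k)) =
        G * δ * Real.exp δ / (G * Real.exp δ - G + 1) -
          Real.log (G * Real.exp δ - G + 1) := by
  have hp' : p = softmax l := funext hp
  have hp_pos : ∀ k, 0 < p k := hp' ▸ softmax_pos l
  have hq' : q = expTilt p (fun k => δ * if k ∈ S then 1 else 0) := by
    rw [hp', ← softmax_add]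
    exact funext hq
  have hN : ∑ k, p k * exp (δ * if k ∈ S then 1 else 0) = G * exp δ - G + 1 := by
    rw [sum_mul_exp_green, hp', sum_softmax, ← hp', ← hG]
    ring
  have hN_pos : 0 < G * exp δ - G + 1 :=
    hN ▸ sum_pos (fun k _ => mul_pos (hp_pos k) (exp_pos _)) univ_nonempty
  have hgreen : ∑ k ∈ S, q k = exp δ * G / (G * exp δ - G + 1) := by
    rw [hq', sum_expTilt_green_mem, hN, hG]
  constructor
  · rw [hgreen, eq_div_iff hN_pos.ne', sub_mul, div_mul_cancel₀ _ hN_pos.ne']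
    ring
  · rw [hq', sum_expTilt_mul_log_div _ _ hp_pos, sum_mul_green_bias, ← hq', hgreen, hN]
    ring
end

section
/- For fixed G ∈ (0,1), Δ > 0, and λ ≥ 0, define the Lagrangian L(δ, λ) = D_kl(δ) − λ(DG(δ) − Δ), where D_kl(δ) = G δ e^δ/(G e^δ − G + 1) − log(G e^δ − G + 1) and DG(δ) = G(1−G)(e^δ − 1)/(G e^δ − G + 1). Then the infimum of L(·, λ) over δ ∈ ℝ is attained at δ = λ, i.e., inf_δ L(δ, λ) = L(λ, λ). -/
/-!
Writing `N(δ) = G e^δ − G + 1`, both `D_kl` and `DG` have derivatives proportional to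
`G(1−G) e^δ / N(δ)²`, with factors `δ` and `1` respectively. Hence
`∂_δ L(δ, λ) = (δ − λ) · G(1−G) e^δ / N(δ)²`, which has the sign of `δ − λ` when `0 < G < 1`:
`L(·, λ)` decreases up to `λ` and increases afterwards.
-/

open Real Set

theorem isMinOn_univ_of_hasDerivAt_sub_mul {f g : ℝ → ℝ} {a : ℝ}
    (hf : ∀ x, HasDerivAt f ((x - a) * g x) x) (hg : ∀ x, 0 ≤ g x) : IsMinOn f univ a := by
  have hd : Differentiable ℝ f := fun x => (hf x).differentiableAt
  refine isMinOn_univ_of_deriv hd.continuous.continuousAt hd.differentiableOn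
    hd.differentiableOn (fun x hx => ?_) (fun x hx => ?_) <;> rw [(hf x).deriv]
  · exact mul_nonpos_of_nonpos_of_nonneg (sub_nonpos.2 (le_of_lt hx)) (hg x)
  · exact mul_nonneg (sub_nonneg.2 (le_of_lt hx)) (hg x)

namespace GreenListWatermark

noncomputable section

def normalizer (G δ : ℝ) : ℝ := G * exp δ - G + 1

def kl (G δ : ℝ) : ℝ := G * δ * exp δ / normalizer G δ - log (normalizer G δ)

def greenGain (G δ : ℝ) : ℝ := G * (1 - G) * (exp δ - 1) / normalizer G δ

variable {G : ℝ}

theorem normalizer_pos (hG0 : 0 ≤ G) (hG1 : G ≤ 1) (δ : ℝ) : 0 < normalizer G δ := by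
  unfold normalizer
  nlinarith [exp_pos δ, mul_nonneg hG0 (exp_pos δ).le, mul_nonneg (sub_nonneg.2 hG1) (exp_pos δ).le]

theorem hasDerivAt_normalizer (δ : ℝ) : HasDerivAt (normalizer G) (G * exp δ) δ :=
  (((hasDerivAt_exp δ).const_mul G).sub_const G).add_const 1

theorem hasDerivAt_greenGain {δ : ℝ} (hN : normalizer G δ ≠ 0) :
    HasDerivAt (greenGain G) (G * (1 - G) * exp δ / normalizer G δ ^ 2) δ := by
  have hnum : HasDerivAt (fun x => G * (1 - G) * (exp x - 1)) (G * (1 - G) * exp δ) δ := by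
    simpa using ((hasDerivAt_exp δ).sub_const 1).const_mul (G * (1 - G))
  refine (hnum.div (hasDerivAt_normalizer δ) hN).congr_deriv ?_
  field_simp
  unfold normalizer
  ring

theorem hasDerivAt_kl {δ : ℝ} (hN : 0 < normalizer G δ) :
    HasDerivAt (kl G) (δ * (G * (1 - G) * exp δ / normalizer G δ ^ 2)) δ := by
  have hnum : HasDerivAt (fun x => G * x * exp x) (G * exp δ + G * δ * exp δ) δ :=
    (((hasDerivAt_id' δ).const_mul G).mul (hasDerivAt_exp δ)).congr_deriv (by ring)
  have hN' := hasDerivAt_normalizer (G := G) δ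
  refine ((hnum.div hN' hN.ne').sub (hN'.log hN.ne')).congr_deriv ?_
  field_simp
  unfold normalizer
  ring

end

end GreenListWatermark

open GreenListWatermark in
theorem lagrangian_inf_at_lambda_general (G Δ lam : ℝ)
    (hG0 : 0 < G) (hG1 : G < 1) :
    let Dkl : ℝ → ℝ := fun δ =>
      G * δ * Real.exp δ / (G * Real.exp δ - G + 1) -
        Real.log (G * Real.exp δ - G + 1)
    let DG : ℝ → ℝ := fun δ =>
      G * (1 - G) * (Real.exp δ - 1) / (G * Real.exp δ - G + 1)
    let L : ℝ → ℝ → ℝ := fun δ lam' => Dkl δ - lam' * (DG δ - Δ)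
    ∀ δ : ℝ, L lam lam ≤ L δ lam := by
  intro Dkl DG L δ
  have hN := normalizer_pos hG0.le hG1.le
  have hL : ∀ x, HasDerivAt (kl G - fun δ => lam * (greenGain G δ - Δ))
      ((x - lam) * (G * (1 - G) * exp x / normalizer G x ^ 2)) x := fun x =>
    ((hasDerivAt_kl (hN x)).sub (((hasDerivAt_greenGain (hN x).ne').sub_const Δ).const_mul lam)
      ).congr_deriv (by ring)
  have hDG'_nonneg : ∀ x, 0 ≤ G * (1 - G) * exp x / normalizer G x ^ 2 := fun x =>
    div_nonneg (mul_nonneg (mul_nonneg hG0.le (sub_nonneg.2 hG1.le)) (exp_pos x).le)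
      (sq_nonneg _)
  exact isMinOn_iff.1 (isMinOn_univ_of_hasDerivAt_sub_mul hL hDG'_nonneg) δ (mem_univ δ)

/-- For the soft watermarking Lagrangian
`L(δ,λ) = D_kl(δ) − λ(DG(δ) − Δ)` built from
`D_kl(δ) = G δ e^δ/(G e^δ − G + 1) − log(G e^δ − G + 1)` and
`DG(δ) = G(1−G)(e^δ−1)/(G e^δ − G + 1)`, the infimum over `δ` is attained at
`δ = λ`. -/
theorem lagrangian_inf_at_lambda (G Δ lam : ℝ)
    (hG0 : 0 < G) (hG1 : G < 1) (hΔ : 0 < Δ) (hlam : 0 ≤ lam) :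
    let Dkl : ℝ → ℝ := fun δ =>
      G * δ * Real.exp δ / (G * Real.exp δ - G + 1) -
        Real.log (G * Real.exp δ - G + 1)
    let DG : ℝ → ℝ := fun δ =>
      G * (1 - G) * (Real.exp δ - 1) / (G * Real.exp δ - G + 1)
    let L : ℝ → ℝ → ℝ := fun δ lam' => Dkl δ - lam' * (DG δ - Δ)
    ∀ δ : ℝ, L lam lam ≤ L δ lam :=
  lagrangian_inf_at_lambda_general G Δ lam hG0 hG1
end

section
/- Consider T tokens with green probabilities G_1,…,G_T ∈ (0,1). In the problem of minimizing (1/T)Σ_t D_kl,t(δ_t) subject to (1/T)Σ_t DG_t(δ_t) ≥ Δ over δ_1,…,δ_T, if a feasible solution exists, then at any optimal solution all δ_t are equal, and the common optimal value δ* is the unique positive λ satisfying (1/T)Σ_t DG_t(λ) = Δ. -/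
/-!
For a multiplier `λ`, each token's Lagrangian `D_kl(δ) - λ DG(δ)` has derivative
`(δ - λ) DG'(δ)` with `DG' > 0`, so it is strictly minimised at `δ = λ`. If `λ ≥ 0` and the
constant vector `λ` meets the constraint with equality, summing these minima shows that every
feasible `δ` has total divergence at least that of the constant `λ`, strictly more unless
`δ ≡ λ`. Such a `λ > 0` exists by the intermediate value theorem, since the average `DG`
is continuous, vanishes at `0` and tends to the average of `1 - G_t` at infinity.
-/

open Finset Real Set Filter Topology

noncomputable section

def dg (g δ : ℝ) : ℝ :=
  g * (1 - g) * (exp δ - 1) / (g * exp δ - g + 1)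

def dkl (g δ : ℝ) : ℝ :=
  g * δ * exp δ / (g * exp δ - g + 1) - log (g * exp δ - g + 1)

def dgDeriv (g δ : ℝ) : ℝ :=
  g * (1 - g) * exp δ / (g * exp δ - g + 1) ^ 2

end

lemma lt_of_hasDerivAt_sub_mul_pos {f p : ℝ → ℝ} {c x : ℝ}
    (hf : ∀ y, HasDerivAt f ((y - c) * p y) y) (hp : ∀ y, 0 < p y) (hx : x ≠ c) :
    f c < f x := by
  have hcont : Continuous f := continuous_iff_continuousAt.2 fun y => (hf y).continuousAt
  rcases hx.lt_or_gt with h | h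
  · refine strictAntiOn_of_deriv_neg (convex_Iic c) hcont.continuousOn (fun y hy => ?_)
      h.le self_mem_Iic h
    rw [interior_Iic] at hy
    rw [(hf y).deriv]
    exact mul_neg_of_neg_of_pos (sub_neg.2 hy) (hp y)
  · refine strictMonoOn_of_deriv_pos (convex_Ici c) hcont.continuousOn (fun y hy => ?_)
      self_mem_Ici h.le h
    rw [interior_Ici] at hy
    rw [(hf y).deriv]
    exact mul_pos (sub_pos.2 hy) (hp y)

lemma exists_pos_eq_of_tendsto_atTop {f : ℝ → ℝ} {L D : ℝ} (hf : Continuous f) (hf0 : f 0 = 0)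
    (hlim : Tendsto f atTop (𝓝 L)) (hD0 : 0 < D) (hDL : D < L) : ∃ x, 0 < x ∧ f x = D := by
  obtain ⟨M, hM0, hDM⟩ :=
    ((eventually_ge_atTop 0).and (hlim.eventually (eventually_gt_nhds hDL))).exists
  obtain ⟨x, hx, hfx⟩ := intermediate_value_Icc hM0 hf.continuousOn ⟨by rw [hf0]; exact hD0.le, hDM.le⟩
  refine ⟨x, hx.1.lt_of_ne ?_, hfx⟩
  rintro rfl
  exact hD0.ne' (hfx ▸ hf0)

section SingleToken

variable {g : ℝ}

lemma dg_denom_pos (hg0 : 0 ≤ g) (hg1 : g ≤ 1) (δ : ℝ) : 0 < g * exp δ - g + 1 := by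
  nlinarith [exp_pos δ, mul_nonneg hg0 (exp_pos δ).le]

lemma dg_zero (g : ℝ) : dg g 0 = 0 := by simp [dg]

lemma dgDeriv_pos (hg0 : 0 < g) (hg1 : g < 1) (δ : ℝ) : 0 < dgDeriv g δ :=
  div_pos (mul_pos (mul_pos hg0 (sub_pos.2 hg1)) (exp_pos δ))
    (pow_pos (dg_denom_pos hg0.le hg1.le δ) 2)

lemma hasDerivAt_dg (hg0 : 0 ≤ g) (hg1 : g ≤ 1) (δ : ℝ) :
    HasDerivAt (dg g) (dgDeriv g δ) δ := by
  have hnum : HasDerivAt (fun x => g * (1 - g) * (exp x - 1)) (g * (1 - g) * exp δ) δ := by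
    simpa using ((hasDerivAt_exp δ).sub_const 1).const_mul (g * (1 - g))
  have hden : HasDerivAt (fun x => g * exp x - g + 1) (g * exp δ) δ := by
    simpa using (((hasDerivAt_exp δ).const_mul g).sub_const g).add_const 1
  refine (hnum.div hden (dg_denom_pos hg0 hg1 δ).ne').congr_deriv ?_
  unfold dgDeriv
  field_simp
  ring

lemma hasDerivAt_dkl (hg0 : 0 ≤ g) (hg1 : g ≤ 1) (δ : ℝ) :
    HasDerivAt (dkl g) (δ * dgDeriv g δ) δ := by
  have hpos := dg_denom_pos hg0 hg1 δ
  have hnum : HasDerivAt (fun x => g * x * exp x) (g * exp δ + g * δ * exp δ) δ := by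
    have hlin : HasDerivAt (fun x => g * x) g δ := by simpa using (hasDerivAt_id δ).const_mul g
    exact hlin.mul (hasDerivAt_exp δ)
  have hden : HasDerivAt (fun x => g * exp x - g + 1) (g * exp δ) δ := by
    simpa using (((hasDerivAt_exp δ).const_mul g).sub_const g).add_const 1
  refine ((hnum.div hden hpos.ne').sub (hden.log hpos.ne')).congr_deriv ?_
  unfold dgDeriv
  field_simp
  ring

lemma continuous_dg (hg0 : 0 ≤ g) (hg1 : g ≤ 1) : Continuous (dg g) :=
  continuous_iff_continuousAt.2 fun δ => (hasDerivAt_dg hg0 hg1 δ).continuousAt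

lemma tendsto_dg_atTop (hg0 : 0 < g) (hg1 : g ≤ 1) : Tendsto (dg g) atTop (𝓝 (1 - g)) := by
  have hrw : ∀ δ, dg g δ = (1 - g) - (1 - g) / (g * exp δ + (1 - g)) := fun δ => by
    have hpos : 0 < g * exp δ + (1 - g) := by linarith [dg_denom_pos hg0.le hg1 δ]
    rw [dg, eq_sub_iff_add_eq, div_add_div _ _ (by linarith) hpos.ne',
      div_eq_iff (mul_ne_zero (by linarith) hpos.ne')]
    ring
  have hden : Tendsto (fun δ => g * exp δ + (1 - g)) atTop atTop :=
    tendsto_atTop_add_const_right _ _ (tendsto_exp_atTop.const_mul_atTop hg0)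
  simpa [funext hrw] using tendsto_const_nhds.sub (tendsto_const_nhds.div_atTop hden)

lemma dkl_sub_mul_dg_lt (hg0 : 0 < g) (hg1 : g < 1) {lam δ : ℝ} (hδ : δ ≠ lam) :
    dkl g lam - lam * dg g lam < dkl g δ - lam * dg g δ :=
  lt_of_hasDerivAt_sub_mul_pos (f := fun x => dkl g x - lam * dg g x)
    (fun x => ((hasDerivAt_dkl hg0.le hg1.le x).sub
      ((hasDerivAt_dg hg0.le hg1.le x).const_mul lam)).congr_deriv (by ring))
    (dgDeriv_pos hg0 hg1) hδ

lemma dkl_sub_mul_dg_le (hg0 : 0 < g) (hg1 : g < 1) (lam δ : ℝ) :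
    dkl g lam - lam * dg g lam ≤ dkl g δ - lam * dg g δ := by
  rcases eq_or_ne δ lam with rfl | hδ
  · rfl
  · exact (dkl_sub_mul_dg_lt hg0 hg1 hδ).le

end SingleToken

section Tokens

variable {ι : Type*} [Fintype ι] {g : ι → ℝ} {lam : ℝ} {δ : ι → ℝ}

lemma sum_dkl_le (hg0 : ∀ i, 0 < g i) (hg1 : ∀ i, g i < 1) (hlam : 0 ≤ lam)
    (hdg : ∑ i, dg (g i) lam ≤ ∑ i, dg (g i) (δ i)) :
    ∑ i, dkl (g i) lam ≤ ∑ i, dkl (g i) (δ i) := by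
  have key : ∑ i, (dkl (g i) lam - lam * dg (g i) lam) ≤
      ∑ i, (dkl (g i) (δ i) - lam * dg (g i) (δ i)) :=
    sum_le_sum fun i _ => dkl_sub_mul_dg_le (hg0 i) (hg1 i) lam (δ i)
  rw [sum_sub_distrib, sum_sub_distrib, ← mul_sum, ← mul_sum] at key
  nlinarith [mul_le_mul_of_nonneg_left hdg hlam]

lemma sum_dkl_lt (hg0 : ∀ i, 0 < g i) (hg1 : ∀ i, g i < 1) (hlam : 0 ≤ lam)
    (hdg : ∑ i, dg (g i) lam ≤ ∑ i, dg (g i) (δ i)) {j : ι} (hj : δ j ≠ lam) :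
    ∑ i, dkl (g i) lam < ∑ i, dkl (g i) (δ i) := by
  have key : ∑ i, (dkl (g i) lam - lam * dg (g i) lam) <
      ∑ i, (dkl (g i) (δ i) - lam * dg (g i) (δ i)) :=
    sum_lt_sum (fun i _ => dkl_sub_mul_dg_le (hg0 i) (hg1 i) lam (δ i))
      ⟨j, mem_univ j, dkl_sub_mul_dg_lt (hg0 j) (hg1 j) hj⟩
  rw [sum_sub_distrib, sum_sub_distrib, ← mul_sum, ← mul_sum] at key
  nlinarith [mul_le_mul_of_nonneg_left hdg hlam]

end Tokens

/-- In the multi-token watermarking problem minimizing the average KL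
divergence subject to an average DG constraint, any optimal solution has all
`δ_t` equal, and the common value is the unique positive `λ` with
`(1/T) Σ_t DG_t(λ) = Δ`. -/
theorem multi_token_optimal_constant (T : ℕ) (hT : 0 < T)
    (G : Fin T → ℝ) (hG0 : ∀ t, 0 < G t) (hG1 : ∀ t, G t < 1)
    (Δ : ℝ) (hΔ0 : 0 < Δ)
    (hfeas : Δ < (1 / (T : ℝ)) * ∑ t, (1 - G t)) :
    let DG : Fin T → ℝ → ℝ := fun t δ =>
      G t * (1 - G t) * (Real.exp δ - 1) / (G t * Real.exp δ - G t + 1)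
    let Dkl : Fin T → ℝ → ℝ := fun t δ =>
      G t * δ * Real.exp δ / (G t * Real.exp δ - G t + 1) -
        Real.log (G t * Real.exp δ - G t + 1)
    let Feasible : (Fin T → ℝ) → Prop := fun δ =>
      Δ ≤ (1 / (T : ℝ)) * ∑ t, DG t (δ t)
    let Optimal : (Fin T → ℝ) → Prop := fun δ =>
      Feasible δ ∧ ∀ δ' : Fin T → ℝ, Feasible δ' →
        (1 / (T : ℝ)) * ∑ t, Dkl t (δ t) ≤ (1 / (T : ℝ)) * ∑ t, Dkl t (δ' t)
    ∃! lam : ℝ, (0 < lam ∧ (1 / (T : ℝ)) * ∑ t, DG t lam = Δ) ∧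
      ∀ δ : Fin T → ℝ, Optimal δ → ∀ t, δ t = lam := by
  intro DG Dkl Feasible Optimal
  have hT' : (0 : ℝ) < 1 / T := by positivity
  obtain ⟨lam, hlam0, hlam⟩ := exists_pos_eq_of_tendsto_atTop
    (f := fun x => (1 / (T : ℝ)) * ∑ t, dg (G t) x)
    (continuous_const.mul (continuous_finsetSum _ fun t _ => continuous_dg (hG0 t).le (hG1 t).le))
    (by simp [dg_zero])
    ((tendsto_finsetSum _ fun t _ => tendsto_dg_atTop (hG0 t) (hG1 t).le).const_mul _)
    hΔ0 hfeas
  have hdg : ∀ δ, Feasible δ → ∑ t, dg (G t) lam ≤ ∑ t, dg (G t) (δ t) := fun δ hδ =>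
    le_of_mul_le_mul_left (hlam.trans_le hδ) hT'
  have hopt : Optimal fun _ => lam := ⟨hlam.ge, fun δ hδ =>
    mul_le_mul_of_nonneg_left (sum_dkl_le hG0 hG1 hlam0.le (hdg δ hδ)) hT'.le⟩
  refine ⟨lam, ⟨⟨hlam0, hlam⟩, fun δ hδ t => ?_⟩, fun lam' h => (h.2 _ hopt ⟨0, hT⟩).symm⟩
  by_contra hne
  exact (sum_dkl_lt hG0 hG1 hlam0.le (hdg δ hδ.1) hne).not_ge
    (le_of_mul_le_mul_left (hδ.2 _ hopt.1) hT')
end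

section
/- Strong duality holds for the single-δ watermarking problem: if the problem min_δ (1/T)Σ_t D_kl,t(δ) subject to (1/T)Σ_t DG_t(δ) ≥ Δ is feasible (with each G_t ∈ (0,1) and 0 < Δ < (1/T)Σ_t(1−G_t)), then its optimal value equals sup_{λ≥0} g(λ) where g(λ) = (1/T)Σ_t [(G_t + Δ)λ − log(G_t e^λ − G_t + 1)], and the primal optimum δ* equals the dual optimum λ*. -/
/-!
Adding `δ` to the green-list logits turns the green mass `c` into the tilted mass
`p(δ) = c e^δ / A(δ)` with `A(δ) = c e^δ - c + 1`; then `DG = p - c` and `D_kl = δ p - log A`,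
and `p` is the derivative of the convex function `log A`. The tangent-line inequality for `log A`
at `δ` says exactly that each dual term `(c + Δ) λ - log A(λ)` is at most the Lagrangian
`D_kl(δ) + λ (Δ - DG(δ))`, with equality at `δ = λ`: so `g` is the Lagrange dual function and
weak duality holds. The average of `DG` is continuous, vanishes at `0` and tends to the average
of `1 - G_t`, so the constraint is active at some `δ* ≥ 0`, where the Lagrangian equals the
objective; hence `(δ*, δ*)` is a saddle point.
-/

open Finset Real Filter Topology

lemma mul_le_log_mul_exp_add_one_sub {p : ℝ} (hp0 : 0 ≤ p) (hp1 : p ≤ 1) (u : ℝ) :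
    p * u ≤ log (p * exp u + (1 - p)) := by
  have hjensen := convexOn_exp.2 (Set.mem_univ u) (Set.mem_univ 0) hp0 (sub_nonneg.2 hp1)
    (add_sub_cancel p 1)
  simp only [smul_eq_mul, mul_zero, add_zero, exp_zero, mul_one] at hjensen
  exact (le_log_iff_exp_le ((exp_pos _).trans_le hjensen)).2 hjensen

section Tilting

variable {c : ℝ}

lemma tilt_norm_pos (hc0 : 0 ≤ c) (hc1 : c ≤ 1) (δ : ℝ) : 0 < c * exp δ - c + 1 := by
  nlinarith [exp_pos δ, mul_nonneg hc0 (exp_pos δ).le]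

lemma tilt_gain_eq (hc0 : 0 ≤ c) (hc1 : c ≤ 1) (δ : ℝ) :
    c * (1 - c) * (exp δ - 1) / (c * exp δ - c + 1) = c * exp δ / (c * exp δ - c + 1) - c := by
  have hA := (tilt_norm_pos hc0 hc1 δ).ne'
  rw [eq_sub_iff_add_eq, div_add' _ _ _ hA, div_eq_div_iff hA hA]
  ring

lemma log_tilt_norm_add_le (hc0 : 0 ≤ c) (hc1 : c ≤ 1) (δ lam : ℝ) :
    log (c * exp δ - c + 1) + c * exp δ / (c * exp δ - c + 1) * (lam - δ) ≤
      log (c * exp lam - c + 1) := by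
  set A := c * exp δ - c + 1
  set p := c * exp δ / A
  have hA : 0 < A := tilt_norm_pos hc0 hc1 δ
  have hp0 : 0 ≤ p := by positivity
  have hp1 : p ≤ 1 := (div_le_one hA).2 (by linarith)
  have hfactor : c * exp lam - c + 1 = A * (p * exp (lam - δ) + (1 - p)) := by
    simp only [p, exp_sub]
    field_simp
    ring
  have hmix : 0 < p * exp (lam - δ) + (1 - p) :=
    pos_of_mul_pos_right (hfactor ▸ tilt_norm_pos hc0 hc1 lam) hA.le
  rw [hfactor, log_mul hA.ne' hmix.ne']
  linarith [mul_le_log_mul_exp_add_one_sub hp0 hp1 (lam - δ)]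

lemma dual_term_le_lagrangian (hc0 : 0 ≤ c) (hc1 : c ≤ 1) (Δ δ lam : ℝ) :
    (c + Δ) * lam - log (c * exp lam - c + 1) ≤
      c * δ * exp δ / (c * exp δ - c + 1) - log (c * exp δ - c + 1) +
        lam * (Δ - c * (1 - c) * (exp δ - 1) / (c * exp δ - c + 1)) := by
  have hcost :
      c * δ * exp δ / (c * exp δ - c + 1) = δ * (c * exp δ / (c * exp δ - c + 1)) := by
    ring
  rw [tilt_gain_eq hc0 hc1, hcost]
  linarith [log_tilt_norm_add_le hc0 hc1 δ lam]

lemma dual_term_eq_lagrangian (hc0 : 0 ≤ c) (hc1 : c ≤ 1) (Δ δ : ℝ) :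
    (c + Δ) * δ - log (c * exp δ - c + 1) =
      c * δ * exp δ / (c * exp δ - c + 1) - log (c * exp δ - c + 1) +
        δ * (Δ - c * (1 - c) * (exp δ - 1) / (c * exp δ - c + 1)) := by
  rw [tilt_gain_eq hc0 hc1]
  ring

lemma tendsto_tilt_gain_atTop (hc0 : 0 < c) (hc1 : c ≤ 1) :
    Tendsto (fun δ => c * (1 - c) * (exp δ - 1) / (c * exp δ - c + 1)) atTop (𝓝 (1 - c)) := by
  have hnorm : Tendsto (fun δ => c * exp δ - c + 1) atTop atTop :=
    (tendsto_atTop_add_const_right atTop (1 - c)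
      (tendsto_exp_atTop.const_mul_atTop hc0)).congr fun δ => by ring
  have hgain : ∀ δ, c * (1 - c) * (exp δ - 1) / (c * exp δ - c + 1) =
      (1 - c) - (1 - c) * (c * exp δ - c + 1)⁻¹ := fun δ => by
    have hA := (tilt_norm_pos hc0.le hc1 δ).ne'
    rw [div_eq_iff hA, sub_mul, inv_mul_cancel_right₀ hA]
    ring
  simp only [hgain]
  simpa using tendsto_const_nhds.sub (hnorm.inv_tendsto_atTop.const_mul (1 - c))

end Tilting

lemma exists_nonneg_weighted_tilt_gain_eq {ι : Type*} [Fintype ι] {c : ι → ℝ}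
    (hc0 : ∀ t, 0 < c t) (hc1 : ∀ t, c t ≤ 1) (w : ℝ) {Δ : ℝ} (hΔ0 : 0 ≤ Δ)
    (hΔ : Δ < w * ∑ t, (1 - c t)) :
    ∃ δ, 0 ≤ δ ∧
      w * ∑ t, c t * (1 - c t) * (exp δ - 1) / (c t * exp δ - c t + 1) = Δ := by
  have hcont : Continuous fun δ =>
      w * ∑ t, c t * (1 - c t) * (exp δ - 1) / (c t * exp δ - c t + 1) :=
    continuous_const.mul <| continuous_finsetSum _ fun t _ =>
      (by fun_prop : Continuous fun δ => c t * (1 - c t) * (exp δ - 1)).div (by fun_prop)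
        fun δ => (tilt_norm_pos (hc0 t).le (hc1 t) δ).ne'
  have hlim :=
    (tendsto_finsetSum univ fun t _ => tendsto_tilt_gain_atTop (hc0 t) (hc1 t)).const_mul w
  obtain ⟨δ, hδ, hδΔ⟩ := isPreconnected_Ici.intermediate_value_Ico (a := 0) Set.self_mem_Ici
    (le_principal_iff.2 (Ici_mem_atTop 0)) hcont.continuousOn hlim ⟨by simpa using hΔ0, hΔ⟩
  exact ⟨δ, hδ, hδΔ⟩

lemma average_add_mul_sub {n : ℕ} (hn : n ≠ 0) (a b : Fin n → ℝ) (lam Δ : ℝ) :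
    1 / (n : ℝ) * ∑ t, (a t + lam * (Δ - b t)) =
      1 / (n : ℝ) * ∑ t, a t + lam * (Δ - 1 / (n : ℝ) * ∑ t, b t) := by
  simp only [sum_add_distrib, ← mul_sum, sum_sub_distrib, sum_const, card_univ, Fintype.card_fin,
    nsmul_eq_mul]
  field_simp

lemma primal_dual_optimal_of_saddle {obj con g : ℝ → ℝ} {Δ x : ℝ}
    (hweak : ∀ δ lam, g lam ≤ obj δ + lam * (Δ - con δ))
    (htight : g x = obj x) (hx : 0 ≤ x) (hcon : con x = Δ) :
    (Δ ≤ con x ∧ ∀ δ, Δ ≤ con δ → obj x ≤ obj δ) ∧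
      (0 ≤ x ∧ ∀ lam, 0 ≤ lam → g lam ≤ g x) ∧ obj x = g x := by
  refine ⟨⟨hcon.ge, fun δ hδ => ?_⟩, ⟨hx, fun lam _ => ?_⟩, htight.symm⟩
  · nlinarith [hweak δ x]
  · simpa [hcon, htight] using hweak x lam

/-- Strong duality for the single-`δ` watermarking problem: the primal optimal
value (minimal average KL subject to the average DG constraint) equals the
supremum of the Lagrangian dual `g` over `λ ≥ 0`, and the primal optimizer
equals the dual optimizer. -/
theorem single_delta_strong_duality (T : ℕ) (hT : 0 < T)
    (G : Fin T → ℝ) (hG0 : ∀ t, 0 < G t) (hG1 : ∀ t, G t < 1)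
    (Δ : ℝ) (hΔ0 : 0 < Δ)
    (hfeas : Δ < (1 / (T : ℝ)) * ∑ t, (1 - G t)) :
    let DG : Fin T → ℝ → ℝ := fun t δ =>
      G t * (1 - G t) * (Real.exp δ - 1) / (G t * Real.exp δ - G t + 1)
    let Dkl : Fin T → ℝ → ℝ := fun t δ =>
      G t * δ * Real.exp δ / (G t * Real.exp δ - G t + 1) -
        Real.log (G t * Real.exp δ - G t + 1)
    let obj : ℝ → ℝ := fun δ => (1 / (T : ℝ)) * ∑ t, Dkl t δ
    let Feasible : ℝ → Prop := fun δ => Δ ≤ (1 / (T : ℝ)) * ∑ t, DG t δ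
    let g : ℝ → ℝ := fun lam =>
      (1 / (T : ℝ)) * ∑ t, ((G t + Δ) * lam -
        Real.log (G t * Real.exp lam - G t + 1))
    ∃ δstar lamstar : ℝ,
      (Feasible δstar ∧ ∀ δ, Feasible δ → obj δstar ≤ obj δ) ∧
      (0 ≤ lamstar ∧ ∀ lam, 0 ≤ lam → g lam ≤ g lamstar) ∧
      obj δstar = g lamstar ∧ δstar = lamstar := by
  intro DG Dkl obj Feasible g
  have hG0' : ∀ t, 0 ≤ G t := fun t => (hG0 t).le
  have hG1' : ∀ t, G t ≤ 1 := fun t => (hG1 t).le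
  have hweak : ∀ δ lam, g lam ≤ obj δ + lam * (Δ - 1 / (T : ℝ) * ∑ t, DG t δ) := by
    intro δ lam
    rw [← average_add_mul_sub hT.ne']
    exact mul_le_mul_of_nonneg_left
      (sum_le_sum fun t _ => dual_term_le_lagrangian (hG0' t) (hG1' t) Δ δ lam) (by positivity)
  obtain ⟨δstar, hδstar, hactive⟩ :=
    exists_nonneg_weighted_tilt_gain_eq hG0 hG1' (1 / (T : ℝ)) hΔ0.le hfeas
  have htight : g δstar = obj δstar := by
    have hsum := average_add_mul_sub hT.ne' (fun t => Dkl t δstar) (fun t => DG t δstar) δstar Δ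
    rw [hactive, sub_self, mul_zero, add_zero] at hsum
    exact (congrArg _ (sum_congr rfl fun t _ =>
      dual_term_eq_lagrangian (hG0' t) (hG1' t) Δ δstar)).trans hsum
  obtain ⟨hprimal, hdual, hvalue⟩ := primal_dual_optimal_of_saddle hweak htight hδstar hactive
  exact ⟨δstar, δstar, hprimal, hdual, hvalue, rfl⟩
end

section
/- Fix Δ ∈ (0,1) and consider γ ∈ (0, 1−Δ). The minimal KL distortion achieving average green probability increase Δ at green ratio γ is K(γ) = (Δ+γ)[log(γ+Δ) − log γ] + (1−Δ−γ)[log(1−γ−Δ) − log(1−γ)]. Then K is strictly convex in γ: its second derivative equals Δ²/(γ²(γ+Δ)) + Δ²/((1−γ)²(1−γ−Δ)) > 0, so the optimal green ratio γ* is the unique solution of −Δ/γ − Δ/(1−γ) + log((γ+Δ)/γ) − log((1−γ−Δ)/(1−γ)) = 0 whenever a critical point exists. -/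
open Real Set

/-!
Both summands of `K` have the shape `(x + c) (log (x + c) - log x)`: the first at `(x, c) = (γ, Δ)`,
the second at `(x, c) = (1 - γ, -Δ)`. Such a term has derivative `log (x + c) - log x - c / x`,
whose own derivative is `c² / (x² (x + c))`, positive wherever `x` and `x + c` are. Hence `K'` is
strictly increasing on `(0, 1 - Δ)`, which makes `K` strictly convex there and gives `K'` at most
one zero.
-/

section LogRatio

variable {c x : ℝ}

theorem hasDerivAt_mul_log_sub_log (hx : x ≠ 0) (hxc : x + c ≠ 0) :
    HasDerivAt (fun y => (y + c) * (log (y + c) - log y)) (log (x + c) - log x - c / x) x := by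
  have hshift : HasDerivAt (fun y => y + c) 1 x := (hasDerivAt_id x).add_const c
  refine (hshift.mul ((hshift.log hxc).sub (hasDerivAt_log hx))).congr_deriv ?_
  simp only [Pi.sub_apply]
  field_simp
  ring

theorem hasDerivAt_log_sub_log_sub_div (hx : x ≠ 0) (hxc : x + c ≠ 0) :
    HasDerivAt (fun y => log (y + c) - log y - c / y) (c ^ 2 / (x ^ 2 * (x + c))) x := by
  have hshift : HasDerivAt (fun y => y + c) 1 x := (hasDerivAt_id x).add_const c
  refine (((hshift.log hxc).sub (hasDerivAt_log hx)).sub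
    ((hasDerivAt_inv hx).const_mul c)).congr_deriv ?_
  field_simp
  ring

end LogRatio

theorem strictMonoOn_of_hasDerivAt_pos {D : Set ℝ} (hD : Convex ℝ D) (hDo : IsOpen D)
    {f f' : ℝ → ℝ} (hf : ∀ x ∈ D, HasDerivAt f (f' x) x) (hf' : ∀ x ∈ D, 0 < f' x) :
    StrictMonoOn f D := by
  refine strictMonoOn_of_hasDerivWithinAt_pos hD
    (fun x hx => (hf x hx).continuousAt.continuousWithinAt) (f' := f') ?_ ?_ <;>
    rw [hDo.interior_eq]
  exacts [fun x hx => (hf x hx).hasDerivWithinAt, hf']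

theorem strictConvexOn_of_hasDerivAt_of_strictMonoOn {D : Set ℝ} (hD : Convex ℝ D)
    (hDo : IsOpen D) {f f' : ℝ → ℝ} (hf : ∀ x ∈ D, HasDerivAt f (f' x) x)
    (hf' : StrictMonoOn f' D) : StrictConvexOn ℝ D f := by
  refine StrictMonoOn.strictConvexOn_of_deriv hD
    (fun x hx => (hf x hx).continuousAt.continuousWithinAt) ?_
  rw [hDo.interior_eq]
  exact hf'.congr fun x hx => ((hf x hx).deriv).symm

namespace Watermark

noncomputable def distortion (Δ γ : ℝ) : ℝ :=
  (Δ + γ) * (log (γ + Δ) - log γ) + (1 - Δ - γ) * (log (1 - γ - Δ) - log (1 - γ))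

noncomputable def distortionDeriv (Δ γ : ℝ) : ℝ :=
  -Δ / γ - Δ / (1 - γ) + log (γ + Δ) - log γ - log (1 - γ - Δ) + log (1 - γ)

noncomputable def distortionDeriv2 (Δ γ : ℝ) : ℝ :=
  Δ ^ 2 / (γ ^ 2 * (γ + Δ)) + Δ ^ 2 / ((1 - γ) ^ 2 * (1 - γ - Δ))

variable {Δ γ : ℝ}

theorem pos_of_mem_Ioo_one_sub (hΔ : 0 < Δ) (hγ : γ ∈ Ioo 0 (1 - Δ)) :
    0 < γ ∧ 0 < γ + Δ ∧ 0 < 1 - γ ∧ 0 < 1 - γ + -Δ := by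
  obtain ⟨h₀, h₁⟩ := hγ
  exact ⟨h₀, by linarith, by linarith, by linarith⟩

theorem hasDerivAt_distortion (hΔ : 0 < Δ) (hγ : γ ∈ Ioo 0 (1 - Δ)) :
    HasDerivAt (distortion Δ) (distortionDeriv Δ γ) γ := by
  obtain ⟨h₁, h₂, h₃, h₄⟩ := pos_of_mem_Ioo_one_sub hΔ hγ
  refine (((hasDerivAt_mul_log_sub_log h₁.ne' h₂.ne').add
    ((hasDerivAt_mul_log_sub_log h₃.ne' h₄.ne').comp_const_sub 1 γ)).congr_of_eventuallyEq
      (.of_forall fun y => ?_)).congr_deriv ?_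
  · simp only [distortion, Pi.add_apply]
    ring_nf
  · simp only [distortionDeriv]
    ring_nf

theorem hasDerivAt_distortionDeriv (hΔ : 0 < Δ) (hγ : γ ∈ Ioo 0 (1 - Δ)) :
    HasDerivAt (distortionDeriv Δ) (distortionDeriv2 Δ γ) γ := by
  obtain ⟨h₁, h₂, h₃, h₄⟩ := pos_of_mem_Ioo_one_sub hΔ hγ
  refine (((hasDerivAt_log_sub_log_sub_div h₁.ne' h₂.ne').sub
    ((hasDerivAt_log_sub_log_sub_div h₃.ne' h₄.ne').comp_const_sub 1 γ)).congr_of_eventuallyEq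
      (.of_forall fun y => ?_)).congr_deriv ?_
  · simp only [distortionDeriv, Pi.sub_apply]
    ring_nf
  · simp only [distortionDeriv2]
    ring_nf

theorem distortionDeriv2_pos (hΔ : 0 < Δ) (hγ : γ ∈ Ioo 0 (1 - Δ)) :
    0 < distortionDeriv2 Δ γ := by
  obtain ⟨h₁, h₂, h₃, h₄⟩ := pos_of_mem_Ioo_one_sub hΔ hγ
  rw [← sub_eq_add_neg] at h₄
  unfold distortionDeriv2
  positivity

theorem strictMonoOn_distortionDeriv (hΔ : 0 < Δ) :
    StrictMonoOn (distortionDeriv Δ) (Ioo 0 (1 - Δ)) :=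
  strictMonoOn_of_hasDerivAt_pos (convex_Ioo _ _) isOpen_Ioo
    (fun _ hγ => hasDerivAt_distortionDeriv hΔ hγ) (fun _ hγ => distortionDeriv2_pos hΔ hγ)

end Watermark

open Watermark in
theorem certainty_equivalent_gamma_convex_general (Δ : ℝ) (hΔ0 : 0 < Δ) :
    let K : ℝ → ℝ := fun γ =>
      (Δ + γ) * (Real.log (γ + Δ) - Real.log γ) +
        (1 - Δ - γ) * (Real.log (1 - γ - Δ) - Real.log (1 - γ))
    let K' : ℝ → ℝ := fun γ =>
      -Δ / γ - Δ / (1 - γ) + Real.log (γ + Δ) - Real.log γ -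
        Real.log (1 - γ - Δ) + Real.log (1 - γ)
    (∀ γ ∈ Ioo (0 : ℝ) (1 - Δ), HasDerivAt K (K' γ) γ) ∧
    (∀ γ ∈ Ioo (0 : ℝ) (1 - Δ),
      HasDerivAt K'
        (Δ ^ 2 / (γ ^ 2 * (γ + Δ)) + Δ ^ 2 / ((1 - γ) ^ 2 * (1 - γ - Δ))) γ ∧
      0 < Δ ^ 2 / (γ ^ 2 * (γ + Δ)) + Δ ^ 2 / ((1 - γ) ^ 2 * (1 - γ - Δ))) ∧
    StrictConvexOn ℝ (Ioo (0 : ℝ) (1 - Δ)) K ∧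
    (∀ γ₁ ∈ Ioo (0 : ℝ) (1 - Δ), ∀ γ₂ ∈ Ioo (0 : ℝ) (1 - Δ),
      K' γ₁ = 0 → K' γ₂ = 0 → γ₁ = γ₂) := by
  intro K K'
  have hK : ∀ γ ∈ Ioo (0 : ℝ) (1 - Δ), HasDerivAt K (K' γ) γ :=
    fun _ hγ => hasDerivAt_distortion hΔ0 hγ
  have hK' : StrictMonoOn K' (Ioo 0 (1 - Δ)) := strictMonoOn_distortionDeriv hΔ0
  refine ⟨hK, fun γ hγ => ⟨hasDerivAt_distortionDeriv hΔ0 hγ, distortionDeriv2_pos hΔ0 hγ⟩,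
    strictConvexOn_of_hasDerivAt_of_strictMonoOn (convex_Ioo _ _) isOpen_Ioo hK hK', ?_⟩
  intro γ₁ h₁ γ₂ h₂ e₁ e₂
  exact hK'.injOn h₁ h₂ (e₁.trans e₂.symm)

/-- The certainty-equivalent minimal distortion
`K(γ) = (Δ+γ)[log(γ+Δ) − log γ] + (1−Δ−γ)[log(1−γ−Δ) − log(1−γ)]` is strictly
convex in `γ` on `(0, 1−Δ)`: its first derivative is
`K'(γ) = −Δ/γ − Δ/(1−γ) + log(γ+Δ) − log γ − log(1−γ−Δ) + log(1−γ)`, its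
second derivative equals `Δ²/(γ²(γ+Δ)) + Δ²/((1−γ)²(1−γ−Δ)) > 0`, and hence
any two critical points of `K'` in `(0, 1−Δ)` coincide. -/
theorem certainty_equivalent_gamma_convex (Δ : ℝ) (hΔ0 : 0 < Δ) (hΔ1 : Δ < 1) :
    let K : ℝ → ℝ := fun γ =>
      (Δ + γ) * (Real.log (γ + Δ) - Real.log γ) +
        (1 - Δ - γ) * (Real.log (1 - γ - Δ) - Real.log (1 - γ))
    let K' : ℝ → ℝ := fun γ =>
      -Δ / γ - Δ / (1 - γ) + Real.log (γ + Δ) - Real.log γ -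
        Real.log (1 - γ - Δ) + Real.log (1 - γ)
    (∀ γ ∈ Ioo (0 : ℝ) (1 - Δ), HasDerivAt K (K' γ) γ) ∧
    (∀ γ ∈ Ioo (0 : ℝ) (1 - Δ),
      HasDerivAt K'
        (Δ ^ 2 / (γ ^ 2 * (γ + Δ)) + Δ ^ 2 / ((1 - γ) ^ 2 * (1 - γ - Δ))) γ ∧
      0 < Δ ^ 2 / (γ ^ 2 * (γ + Δ)) + Δ ^ 2 / ((1 - γ) ^ 2 * (1 - γ - Δ))) ∧
    StrictConvexOn ℝ (Ioo (0 : ℝ) (1 - Δ)) K ∧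
    (∀ γ₁ ∈ Ioo (0 : ℝ) (1 - Δ), ∀ γ₂ ∈ Ioo (0 : ℝ) (1 - Δ),
      K' γ₁ = 0 → K' γ₂ = 0 → γ₁ = γ₂) :=
  certainty_equivalent_gamma_convex_general Δ hΔ0
end
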